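/- arXiv:2401.10147 — 3 statements merged into one kernel-verified Lean document; each statement's English description precedes it below -/
import Mathlib

section
/- Let 𝒮 be a family of finite subsets of a set V and let c, u: 𝒮 → [0,∞) be such that for every Z ∈ 𝒮: Σ_{X∈𝒮} χ(Z,X) u(X) e^{c(X)} ≤ c(Z). Then for every Z ∈ 𝒮 the following two inequalities hold: (1) Σ_{k≥1} Σ_{[X₁,…,X_k]∈𝕊_k} χ(Z, X₁, …, X_k) ∏_{j=1}^k u(X_j) ≤ e^{c(Z)} − 1, where 𝕊_k is the set of all k-element multisets of elements of 𝒮; and (2) Σ_{k≥1} Σ_{[X₁,…,X_k]∈ℙ_k} χ(Z, X₁, …, X_k) ∏_{j=1}^k u(X_j) ≤ c(Z), where ℙ_k ⊆ 𝕊_k is the subset of connected multisets. -/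
set_option linter.unusedVariables false
set_option linter.unusedSectionVars false

open scoped BigOperators ENNReal Matrix.Norms.L2Operator

noncomputable section

/-- A multiset `γ = [X₁,…,X_k]` of finite subsets is *connected* if it cannot be split
into two nonempty mutually disjoint parts (equivalently, the graph on its indices with an
edge `{i,j}` whenever `X_i ∩ X_j ≠ ∅` is connected). -/
def MConn {W : Type*} (γ : Multiset (Finset W)) : Prop :=
  ∀ γ₁ γ₂ : Multiset (Finset W), γ = γ₁ + γ₂ → γ₁ ≠ 0 → γ₂ ≠ 0 →
    ∃ X ∈ γ₁, ∃ Y ∈ γ₂, ¬Disjoint X Y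

open Classical in
/-- `χ(Z, X₁, …, X_k)`: the indicator that the multiset `[Z, X₁, …, X_k]` is connected. -/
noncomputable def mchi {W : Type*} (Z : Finset W) (γ : Multiset (Finset W)) : ℝ≥0∞ :=
  if MConn (Z ::ₘ γ) then 1 else 0

/-! This is the Kotecký–Preiss induction on the number `n` of members. Let `A_n(Z)` be the sum of
`χ(Z, γ) ∏_{X ∈ γ} u(X)` over all multisets `γ` of at most `n` members of `𝒮` (the empty one
included, contributing `1`) and `C_n(Z)` the same sum over the nonempty connected ones. A
connected `γ` with `χ(Z, γ) = 1` has a member `X` meeting `Z`, and `[X, γ - X]` is connected, so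
`C_{n+1}(Z) ≤ ∑_{X ∩ Z ≠ ∅} u(X) A_n(X)`. An arbitrary `γ` with `χ(Z, γ) = 1` is the sum of its
connected components, which are distinct and each meet `Z`; hence `A_n(Z)` is at most the sum
over finite sets of such components of the product of their weights, which is at most
`∏ (1 + w) ≤ e^{C_n(Z)}`. The hypothesis closes the induction: `C_n(Z) ≤ c(Z)` and
`A_n(Z) ≤ e^{c(Z)}` for every `n`, and the bounds pass to `n = ∞`. -/

lemma ENNReal.tsum_le_tsum_of_forall_exists {α β : Type*} (φ : β → α) {f : α → ℝ≥0∞}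
    {g : β → ℝ≥0∞} (h : ∀ a, f a ≠ 0 → ∃ b, φ b = a ∧ f a ≤ g b) :
    ∑' a, f a ≤ ∑' b, g b := by
  choose σ hσ using h
  have hinj : Function.Injective fun a : Function.support f => σ a a.2 :=
    fun a a' haa' => Subtype.ext <| by
      rw [← (hσ a a.2).1, ← (hσ a' a'.2).1]
      exact congrArg φ haa'
  calc ∑' a, f a = ∑' a : Function.support f, f a := (tsum_subtype_support f).symm
    _ ≤ ∑' a : Function.support f, g (σ a a.2) := ENNReal.tsum_le_tsum fun a => (hσ a a.2).2
    _ ≤ ∑' b, g b := ENNReal.tsum_comp_le_tsum_of_injective hinj g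

lemma ENNReal.tsum_finset_prod_le_exp {β : Type*} {f : β → ℝ≥0∞} {r : ℝ} (hr : 0 ≤ r)
    (hf : ∑' x, f x ≤ ENNReal.ofReal r) :
    ∑' s : Finset β, ∏ x ∈ s, f x ≤ ENNReal.ofReal (Real.exp r) := by
  classical
  refine ENNReal.summable.tsum_le_of_sum_le fun T => ?_
  set t := T.biUnion id
  have hfin : ∀ x, f x ≠ ⊤ :=
    fun x => ne_top_of_le_ne_top ENNReal.ofReal_ne_top ((ENNReal.le_tsum x).trans hf)
  have hsum : ∑ x ∈ t, (f x).toReal ≤ r := by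
    rw [← ENNReal.toReal_sum fun x _ => hfin x]
    exact ENNReal.toReal_le_of_le_ofReal hr ((ENNReal.sum_le_tsum t).trans hf)
  calc ∑ s ∈ T, ∏ x ∈ s, f x ≤ ∑ s ∈ t.powerset, ∏ x ∈ s, f x :=
        Finset.sum_le_sum_of_subset fun s hs =>
          Finset.mem_powerset.2 (Finset.subset_biUnion_of_mem id hs)
    _ = ∏ x ∈ t, (1 + f x) := (Finset.prod_one_add t).symm
    _ ≤ ∏ x ∈ t, ENNReal.ofReal (Real.exp (f x).toReal) := by
        gcongr with x
        calc 1 + f x = ENNReal.ofReal ((f x).toReal + 1) := by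
              rw [ENNReal.ofReal_add ENNReal.toReal_nonneg zero_le_one,
                ENNReal.ofReal_toReal (hfin x), ENNReal.ofReal_one, add_comm]
          _ ≤ _ := ENNReal.ofReal_le_ofReal (Real.add_one_le_exp _)
    _ = ENNReal.ofReal (Real.exp (∑ x ∈ t, (f x).toReal)) := by
        rw [Real.exp_sum, ENNReal.ofReal_prod_of_nonneg fun x _ => (Real.exp_pos _).le]
    _ ≤ ENNReal.ofReal (Real.exp r) := by gcongr

namespace Multiset

variable {α : Type*}

lemma tsum_le_of_forall_card_le {f : Multiset α → ℝ≥0∞} {B : ℝ≥0∞}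
    (h : ∀ n, ∑' γ, (if card γ ≤ n then f γ else 0) ≤ B) : ∑' γ, f γ ≤ B := by
  refine ENNReal.summable.tsum_le_of_sum_le fun s => ?_
  calc ∑ γ ∈ s, f γ = ∑ γ ∈ s, if card γ ≤ s.sup card then f γ else 0 :=
        Finset.sum_congr rfl fun γ hγ => (if_pos (Finset.le_sup hγ)).symm
    _ ≤ _ := ENNReal.sum_le_tsum s
    _ ≤ B := h _

lemma tsum_tsum_card_eq_succ (P : Multiset α → Prop) [DecidablePred P] [DecidableEq α]
    (f : Multiset α → ℝ≥0∞) :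
    ∑' k : ℕ, ∑' γ : {γ : Multiset α // γ.card = k + 1 ∧ P γ}, f γ =
      ∑' γ, if γ ≠ 0 ∧ P γ then f γ else 0 := by
  calc ∑' k : ℕ, ∑' γ : {γ : Multiset α // γ.card = k + 1 ∧ P γ}, f γ
      = ∑' (k : ℕ) (γ : Multiset α), if γ.card = k + 1 ∧ P γ then f γ else 0 := by
        refine tsum_congr fun k => ?_
        refine (tsum_subtype {γ : Multiset α | γ.card = k + 1 ∧ P γ} f).trans ?_
        simp only [Set.indicator_apply, Set.mem_ofPred_eq]
    _ = ∑' (γ : Multiset α) (k : ℕ), if γ.card = k + 1 ∧ P γ then f γ else 0 :=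
        ENNReal.tsum_comm
    _ = _ := by
        refine tsum_congr fun γ => ?_
        rcases eq_or_ne γ 0 with rfl | hγ
        · simp
        have hcard : γ.card = γ.card - 1 + 1 := (Nat.sub_add_cancel (card_pos.2 hγ)).symm
        rw [tsum_eq_single (γ.card - 1) fun k hk => if_neg fun h => hk (by omega)]
        simp only [← hcard, true_and, hγ, ne_eq, not_false_eq_true]

end Multiset

section

variable {W : Type*}

def Separated (δ ε : Multiset (Finset W)) : Prop :=
  ∀ X ∈ δ, ∀ Y ∈ ε, Disjoint X Y

lemma Separated.symm {δ ε : Multiset (Finset W)} (h : Separated δ ε) : Separated ε δ :=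
  fun X hX Y hY => (h Y hY X hX).symm

lemma Separated.mono_left {δ δ' ε : Multiset (Finset W)} (h : Separated δ ε)
    (hδ : ∀ X ∈ δ', X ∈ δ) : Separated δ' ε :=
  fun X hX => h X (hδ X hX)

lemma mConn_iff {γ : Multiset (Finset W)} :
    MConn γ ↔ ∀ γ₁ γ₂, γ = γ₁ + γ₂ → γ₁ ≠ 0 → γ₂ ≠ 0 → ¬Separated γ₁ γ₂ := by
  simp [MConn, Separated]

lemma mConn_singleton (X : Finset W) : MConn ({X} : Multiset (Finset W)) := by
  intro γ₁ γ₂ h h₁ h₂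
  have := congrArg Multiset.card h
  simp only [Multiset.card_singleton, Multiset.card_add] at this
  have := Multiset.card_pos.2 h₁
  have := Multiset.card_pos.2 h₂
  omega

namespace MConn

variable {Z : Finset W} {γ : Multiset (Finset W)}

lemma exists_not_disjoint (h : MConn (Z ::ₘ γ)) (hγ : γ ≠ 0) : ∃ X ∈ γ, ¬Disjoint Z X := by
  obtain ⟨A, hA, X, hX, hAX⟩ := h {Z} γ (Multiset.singleton_add Z γ).symm (by simp) hγ
  rw [Multiset.mem_singleton] at hA
  exact ⟨X, hX, hA ▸ hAX⟩

lemma empty_notMem (h : MConn (Z ::ₘ γ)) : ∅ ∉ γ := by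
  classical
  intro hγ
  have hsplit : Z ::ₘ γ = (Z ::ₘ γ.erase ∅) + {∅} := by
    rw [add_comm, Multiset.singleton_add, Multiset.cons_swap, Multiset.cons_erase hγ]
  refine mConn_iff.1 h _ _ hsplit (by simp) (by simp) fun X _ Y hY => ?_
  rw [Multiset.mem_singleton.1 hY]
  exact Finset.disjoint_empty_right X

lemma cons (hγ : MConn γ) (hZ : ∃ X ∈ γ, ¬Disjoint Z X) : MConn (Z ::ₘ γ) := by
  have key : ∀ γ₁ γ₂, Z ::ₘ γ = γ₁ + γ₂ → Z ∈ γ₁ → γ₂ ≠ 0 → ¬Separated γ₁ γ₂ := by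
    intro γ₁ γ₂ h hZ₁ h₂ hsep
    classical
    have hsplit : γ = γ₁.erase Z + γ₂ := by
      rw [← Multiset.cons_inj_right Z, h, ← Multiset.cons_add, Multiset.cons_erase hZ₁]
    by_cases h₁ : γ₁.erase Z = 0
    · obtain ⟨X, hX, hZX⟩ := hZ
      rw [hsplit, h₁, zero_add] at hX
      exact hZX (hsep Z hZ₁ X hX)
    · exact mConn_iff.1 hγ _ _ hsplit h₁ h₂
        (hsep.mono_left fun _ => Multiset.mem_of_mem_erase)
  rw [mConn_iff]
  intro γ₁ γ₂ h h₁ h₂ hsep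
  rcases Multiset.mem_add.1 (h ▸ Multiset.mem_cons_self Z γ) with hZ₁ | hZ₂
  · exact key γ₁ γ₂ h hZ₁ h₂ hsep
  · exact key γ₂ γ₁ (h.trans (add_comm _ _)) hZ₂ h₁ hsep.symm

lemma of_separated {δ ε : Multiset (Finset W)} (h : MConn (Z ::ₘ (δ + ε))) (hδ : δ ≠ 0)
    (hδc : MConn δ) (hsep : Separated δ ε) : MConn (Z ::ₘ δ) := by
  refine hδc.cons ?_
  obtain ⟨X, hX, Y, hY, hXY⟩ := h δ (Z ::ₘ ε) (Multiset.add_cons _ _ _ ▸ by simp) hδ (by simp)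
  rcases Multiset.mem_cons.1 hY with rfl | hY
  · exact ⟨X, hX, fun hd => hXY hd.symm⟩
  · exact absurd (hsep X hX Y hY) hXY

end MConn

lemma mConn_pair {Z X : Finset W} : MConn (Z ::ₘ {X}) ↔ ¬Disjoint Z X := by
  refine ⟨fun h => ?_, fun h => (mConn_singleton X).cons ⟨X, Multiset.mem_singleton_self X, h⟩⟩
  obtain ⟨Y, hY, hZY⟩ := h.exists_not_disjoint (by simp)
  rwa [Multiset.mem_singleton.1 hY] at hZY

lemma exists_connected_separated_part {γ : Multiset (Finset W)} (hγ : γ ≠ 0) :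
    ∃ δ ε, γ = δ + ε ∧ δ ≠ 0 ∧ MConn δ ∧ Separated δ ε := by
  induction h : Multiset.card γ using Nat.strong_induction_on generalizing γ with
  | _ n ih =>
    by_cases hconn : MConn γ
    · exact ⟨γ, 0, (add_zero γ).symm, hγ, hconn, fun _ _ _ hY => absurd hY (by simp)⟩
    obtain ⟨γ₁, γ₂, hsplit, h₁, h₂, hsep⟩ : ∃ γ₁ γ₂, γ = γ₁ + γ₂ ∧ γ₁ ≠ 0 ∧ γ₂ ≠ 0 ∧
        Separated γ₁ γ₂ := by
      simpa [mConn_iff] using hconn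
    have hlt : Multiset.card γ₁ < n := by
      have := Multiset.card_pos.2 h₂
      rw [← h, hsplit, Multiset.card_add]
      omega
    obtain ⟨δ, ε, rfl, hδ, hδc, hδε⟩ := ih _ hlt h₁ rfl
    refine ⟨δ, ε + γ₂, by rw [hsplit, add_assoc], hδ, hδc, fun X hX Y hY => ?_⟩
    rcases Multiset.mem_add.1 hY with hY | hY
    · exact hδε X hX Y hY
    · exact hsep X (Multiset.mem_add.2 (Or.inl hX)) Y hY

/-- The connected components of `γ`. An empty member would be separated from itself, so the
components could repeat and would not form a `Finset`. -/
lemma exists_connected_decomposition {γ : Multiset (Finset W)} (hγ : ∅ ∉ γ) :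
    ∃ s : Finset (Multiset (Finset W)), ∑ δ ∈ s, δ = γ ∧
      ∀ δ ∈ s, δ ≠ 0 ∧ MConn δ ∧ ∃ ε, γ = δ + ε ∧ Separated δ ε := by
  classical
  induction h : Multiset.card γ using Nat.strong_induction_on generalizing γ with
  | _ n ih =>
    rcases eq_or_ne γ 0 with rfl | hne
    · exact ⟨∅, by simp, by simp⟩
    obtain ⟨δ₀, ε₀, rfl, hδ₀, hδ₀c, hsep₀⟩ := exists_connected_separated_part hne
    have hlt : Multiset.card ε₀ < n := by
      have := Multiset.card_pos.2 hδ₀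
      rw [← h, Multiset.card_add]
      omega
    obtain ⟨s, hsum, hs⟩ :=
      ih _ hlt (fun h' => hγ (Multiset.mem_add.2 (Or.inr h'))) rfl
    have hδ₀s : δ₀ ∉ s := by
      intro hmem
      obtain ⟨X, hX⟩ := Multiset.exists_mem_of_ne_zero hδ₀
      have hXε : X ∈ ε₀ :=
        Multiset.mem_of_le (hsum ▸ Finset.single_le_sum (f := id) (fun _ _ => zero_le) hmem) hX
      have hX0 : X = ∅ := disjoint_self.1 (hsep₀ X hX X hXε)
      exact hγ (hX0 ▸ Multiset.mem_add.2 (Or.inl hX))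
    refine ⟨insert δ₀ s, by rw [Finset.sum_insert hδ₀s, hsum], fun δ hδ => ?_⟩
    rcases Finset.mem_insert.1 hδ with rfl | hδ
    · exact ⟨hδ₀, hδ₀c, ε₀, rfl, hsep₀⟩
    obtain ⟨hδne, hδc, ε, rfl, hsep⟩ := hs δ hδ
    refine ⟨hδne, hδc, δ₀ + ε, by abel, fun X hX Y hY => ?_⟩
    rcases Multiset.mem_add.1 hY with hY | hY
    · exact (hsep₀ Y hY X (Multiset.mem_add.2 (Or.inl hX))).symm
    · exact hsep X hX Y hY

lemma mchi_eq_one {Z : Finset W} {γ : Multiset (Finset W)} (h : MConn (Z ::ₘ γ)) :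
    mchi Z γ = 1 := by
  simp [mchi, h]

lemma mConn_of_mchi_ne_zero {Z : Finset W} {γ : Multiset (Finset W)} (h : mchi Z γ ≠ 0) :
    MConn (Z ::ₘ γ) := by
  by_contra hγ
  simp [mchi, hγ] at h

namespace KoteckyPreiss

variable (a : Finset W → ℝ≥0∞)

def weight (γ : Multiset (Finset W)) : ℝ≥0∞ :=
  (γ.map a).prod

lemma weight_cons (X : Finset W) (γ : Multiset (Finset W)) :
    weight a (X ::ₘ γ) = a X * weight a γ := by
  simp [weight]

lemma weight_finset_sum (s : Finset (Multiset (Finset W))) :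
    weight a (∑ δ ∈ s, δ) = ∏ δ ∈ s, weight a δ := by
  rw [weight, ← Multiset.mapAddMonoidHom_apply, map_sum, Multiset.prod_sum]
  rfl

open Classical in
lemma weight_indicator (S : Set (Finset W)) (g : Finset W → ℝ≥0∞) (γ : Multiset (Finset W)) :
    weight (S.indicator g) γ = if ∀ X ∈ γ, X ∈ S then weight g γ else 0 := by
  induction γ using Multiset.induction_on with
  | empty => simp [weight]
  | cons X γ ih =>
    by_cases hX : X ∈ S
    · simp [weight_cons, ih, hX]
    · simp [weight_cons, hX]

open Classical in
def clusterSum (n : ℕ) (Z : Finset W) : ℝ≥0∞ :=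
  ∑' γ : Multiset (Finset W), if Multiset.card γ ≤ n then mchi Z γ * weight a γ else 0

open Classical in
def connectedClusterSum (n : ℕ) (Z : Finset W) : ℝ≥0∞ :=
  ∑' γ : Multiset (Finset W), if Multiset.card γ ≤ n then
    (if γ ≠ 0 ∧ MConn γ then mchi Z γ * weight a γ else 0) else 0

lemma connectedClusterSum_succ_le (n : ℕ) (Z : Finset W) :
    connectedClusterSum a (n + 1) Z ≤ ∑' X, mchi Z {X} * a X * clusterSum a n X := by
  classical
  calc connectedClusterSum a (n + 1) Z
      ≤ ∑' p : Finset W × Multiset (Finset W), mchi Z {p.1} * a p.1 *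
          (if Multiset.card p.2 ≤ n then mchi p.1 p.2 * weight a p.2 else 0) := by
        refine ENNReal.tsum_le_tsum_of_forall_exists (fun p => p.1 ::ₘ p.2) fun γ hγ => ?_
        obtain ⟨hcard, ⟨hne, hconn⟩, hchi⟩ :=
          ite_ne_right_iff.1 hγ |>.imp_right ite_ne_right_iff.1
        have hZγ := mConn_of_mchi_ne_zero (left_ne_zero_of_mul hchi)
        obtain ⟨X, hX, hZX⟩ := hZγ.exists_not_disjoint hne
        have hcard' : Multiset.card (γ.erase X) ≤ n := by
          have := Multiset.card_erase_lt_of_mem hX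
          omega
        refine ⟨(X, γ.erase X), Multiset.cons_erase hX, le_of_eq ?_⟩
        dsimp only
        rw [if_pos hcard, if_pos ⟨hne, hconn⟩, if_pos hcard', mchi_eq_one hZγ,
          mchi_eq_one (mConn_pair.2 hZX),
          mchi_eq_one ((Multiset.cons_erase hX).symm ▸ hconn), one_mul, one_mul, one_mul,
          ← weight_cons, Multiset.cons_erase hX]
    _ = ∑' X, mchi Z {X} * a X * clusterSum a n X := by
        rw [ENNReal.tsum_prod (f := fun X δ => mchi Z {X} * a X *
          (if Multiset.card δ ≤ n then mchi X δ * weight a δ else 0))]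
        simp only [ENNReal.tsum_mul_left, clusterSum]

lemma clusterSum_le_exp {n : ℕ} {Z : Finset W} {r : ℝ} (hr : 0 ≤ r)
    (h : connectedClusterSum a n Z ≤ ENNReal.ofReal r) :
    clusterSum a n Z ≤ ENNReal.ofReal (Real.exp r) := by
  classical
  refine le_trans ?_ (ENNReal.tsum_finset_prod_le_exp hr h)
  refine ENNReal.tsum_le_tsum_of_forall_exists (fun s => ∑ δ ∈ s, δ) fun γ hγ => ?_
  obtain ⟨hcard, hchi⟩ := ite_ne_right_iff.1 hγ
  have hZγ := mConn_of_mchi_ne_zero (left_ne_zero_of_mul hchi)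
  obtain ⟨s, hsum, hs⟩ := exists_connected_decomposition hZγ.empty_notMem
  refine ⟨s, hsum, le_of_eq ?_⟩
  rw [if_pos hcard, mchi_eq_one hZγ, one_mul, ← hsum, weight_finset_sum]
  refine Finset.prod_congr rfl fun δ hδ => ?_
  obtain ⟨hδ0, hδc, ε, hγδ, hsep⟩ := hs δ hδ
  have hcardδ : Multiset.card δ ≤ n :=
    (Multiset.card_le_card (hγδ ▸ Multiset.le_add_right δ ε)).trans hcard
  rw [if_pos hcardδ, if_pos ⟨hδ0, hδc⟩,
    mchi_eq_one ((hγδ ▸ hZγ).of_separated hδ0 hδc hsep), one_mul]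

lemma connectedClusterSum_zero (Z : Finset W) : connectedClusterSum a 0 Z = 0 := by
  simp [connectedClusterSum]

variable {a} {S : Set (Finset W)} {c : Finset W → ℝ}

lemma connectedClusterSum_le (hc0 : ∀ X ∈ S, 0 ≤ c X) (ha : ∀ X ∉ S, a X = 0)
    (hyp : ∀ Z ∈ S, ∑' X, mchi Z {X} * a X * ENNReal.ofReal (Real.exp (c X)) ≤
      ENNReal.ofReal (c Z)) (n : ℕ) :
    ∀ Z ∈ S, connectedClusterSum a n Z ≤ ENNReal.ofReal (c Z) := by
  induction n with
  | zero => simp [connectedClusterSum_zero]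
  | succ n ih =>
    intro Z hZ
    calc connectedClusterSum a (n + 1) Z ≤ ∑' X, mchi Z {X} * a X * clusterSum a n X :=
          connectedClusterSum_succ_le a n Z
      _ ≤ ∑' X, mchi Z {X} * a X * ENNReal.ofReal (Real.exp (c X)) := by
          refine ENNReal.tsum_le_tsum fun X => ?_
          by_cases hX : X ∈ S
          · exact mul_le_mul_right (clusterSum_le_exp a (hc0 X hX) (ih X hX)) _
          · simp [ha X hX]
      _ ≤ ENNReal.ofReal (c Z) := hyp Z hZ

open Classical in
theorem tsum_mchi_mul_weight_le (hc0 : ∀ X ∈ S, 0 ≤ c X) (ha : ∀ X ∉ S, a X = 0)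
    (hyp : ∀ Z ∈ S, ∑' X, mchi Z {X} * a X * ENNReal.ofReal (Real.exp (c X)) ≤
      ENNReal.ofReal (c Z)) {Z : Finset W} (hZ : Z ∈ S) :
    ∑' γ, (if γ ≠ 0 then mchi Z γ * weight a γ else 0) ≤
      ENNReal.ofReal (Real.exp (c Z) - 1) := by
  have hall : ∑' γ, mchi Z γ * weight a γ ≤ ENNReal.ofReal (Real.exp (c Z)) :=
    Multiset.tsum_le_of_forall_card_le fun n =>
      clusterSum_le_exp a (hc0 Z hZ) (connectedClusterSum_le hc0 ha hyp n Z hZ)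
  rw [ENNReal.tsum_eq_add_tsum_ite 0, mchi_eq_one (mConn_singleton Z), weight,
    Multiset.map_zero, Multiset.prod_zero, one_mul] at hall
  rw [ENNReal.ofReal_sub _ zero_le_one, ENNReal.ofReal_one]
  refine ENNReal.le_sub_of_add_le_left ENNReal.one_ne_top (le_trans (le_of_eq ?_) hall)
  simp_rw [ite_not]
  congr!

open Classical in
theorem tsum_connected_mchi_mul_weight_le (hc0 : ∀ X ∈ S, 0 ≤ c X) (ha : ∀ X ∉ S, a X = 0)
    (hyp : ∀ Z ∈ S, ∑' X, mchi Z {X} * a X * ENNReal.ofReal (Real.exp (c X)) ≤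
      ENNReal.ofReal (c Z)) {Z : Finset W} (hZ : Z ∈ S) :
    ∑' γ, (if γ ≠ 0 ∧ MConn γ then mchi Z γ * weight a γ else 0) ≤ ENNReal.ofReal (c Z) :=
  Multiset.tsum_le_of_forall_card_le fun n => connectedClusterSum_le hc0 ha hyp n Z hZ

end KoteckyPreiss

end

theorem multiset_convergence_lemma_general {V : Type*}
    (S : Set (Finset V)) (c u : Finset V → ℝ)
    (hc0 : ∀ X, 0 ≤ c X)
    (hyp : ∀ Z ∈ S, ∑' X : S, mchi Z {X.1} * ENNReal.ofReal (u X.1) *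
        ENNReal.ofReal (Real.exp (c X.1)) ≤ ENNReal.ofReal (c Z)) :
    ∀ Z ∈ S,
      (∑' k : ℕ, ∑' γ : {γ : Multiset (Finset V) // γ.card = k + 1 ∧ ∀ X ∈ γ, X ∈ S},
          mchi Z γ.1 * (γ.1.map fun X => ENNReal.ofReal (u X)).prod ≤
        ENNReal.ofReal (Real.exp (c Z) - 1)) ∧
      (∑' k : ℕ, ∑' γ : {γ : Multiset (Finset V) //
            γ.card = k + 1 ∧ (∀ X ∈ γ, X ∈ S) ∧ MConn γ},
          mchi Z γ.1 * (γ.1.map fun X => ENNReal.ofReal (u X)).prod ≤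
        ENNReal.ofReal (c Z)) := by
  classical
  intro Z hZ
  set a := S.indicator fun X => ENNReal.ofReal (u X)
  have ha : ∀ X ∉ S, a X = 0 := fun X hX => Set.indicator_of_notMem hX _
  have hyp' : ∀ Z ∈ S, ∑' X, mchi Z {X} * a X * ENNReal.ofReal (Real.exp (c X)) ≤
      ENNReal.ofReal (c Z) := by
    intro Z hZ
    refine le_of_eq_of_le ?_ (hyp Z hZ)
    rw [tsum_subtype S fun X => mchi Z {X} * ENNReal.ofReal (u X) *
      ENNReal.ofReal (Real.exp (c X))]
    refine tsum_congr fun X => ?_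
    by_cases hX : X ∈ S <;> simp [a, hX]
  have hc0' : ∀ X ∈ S, 0 ≤ c X := fun X _ => hc0 X
  have hweight : ∀ γ, (if ∀ X ∈ γ, X ∈ S then (γ.map fun X => ENNReal.ofReal (u X)).prod
      else 0) = KoteckyPreiss.weight a γ := fun γ => (KoteckyPreiss.weight_indicator S _ γ).symm
  set f := fun γ : Multiset (Finset V) =>
    mchi Z γ * (γ.map fun X => ENNReal.ofReal (u X)).prod
  constructor
  · rw [Multiset.tsum_tsum_card_eq_succ (fun γ => ∀ X ∈ γ, X ∈ S) f]
    refine le_of_eq_of_le (tsum_congr fun γ => ?_)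
      (KoteckyPreiss.tsum_mchi_mul_weight_le hc0' ha hyp' hZ)
    rw [← hweight]
    split_ifs <;> simp_all [f]
  · rw [Multiset.tsum_tsum_card_eq_succ (fun γ => (∀ X ∈ γ, X ∈ S) ∧ MConn γ) f]
    refine le_of_eq_of_le (tsum_congr fun γ => ?_)
      (KoteckyPreiss.tsum_connected_mchi_mul_weight_le hc0' ha hyp' hZ)
    rw [← hweight]
    split_ifs <;> simp_all [f]

/-- (Lemma 3.12.) Let `𝒮` be a family of finite subsets of `V` and
`c, u : 𝒮 → [0,∞)` with `∑_{X∈𝒮} χ(Z,X) u(X) e^{c(X)} ≤ c(Z)` for every `Z ∈ 𝒮`. Then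
for every `Z ∈ 𝒮`:
(1) `∑_{k≥1} ∑_{[X₁,…,X_k]∈𝕊_k} χ(Z,X₁,…,X_k) ∏_j u(X_j) ≤ e^{c(Z)} - 1`, where `𝕊_k`
is the set of all `k`-element multisets of elements of `𝒮`; and
(2) `∑_{k≥1} ∑_{[X₁,…,X_k]∈ℙ_k} χ(Z,X₁,…,X_k) ∏_j u(X_j) ≤ c(Z)`, where `ℙ_k ⊆ 𝕊_k` is
the subset of connected multisets. -/
theorem multiset_convergence_lemma {V : Type*}
    (S : Set (Finset V)) (c u : Finset V → ℝ)
    (hc0 : ∀ X, 0 ≤ c X) (hu0 : ∀ X, 0 ≤ u X)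
    (hyp : ∀ Z ∈ S, ∑' X : S, mchi Z {X.1} * ENNReal.ofReal (u X.1) *
        ENNReal.ofReal (Real.exp (c X.1)) ≤ ENNReal.ofReal (c Z)) :
    ∀ Z ∈ S,
      (∑' k : ℕ, ∑' γ : {γ : Multiset (Finset V) // γ.card = k + 1 ∧ ∀ X ∈ γ, X ∈ S},
          mchi Z γ.1 * (γ.1.map fun X => ENNReal.ofReal (u X)).prod ≤
        ENNReal.ofReal (Real.exp (c Z) - 1)) ∧
      (∑' k : ℕ, ∑' γ : {γ : Multiset (Finset V) //
            γ.card = k + 1 ∧ (∀ X ∈ γ, X ∈ S) ∧ MConn γ},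
          mchi Z γ.1 * (γ.1.map fun X => ENNReal.ofReal (u X)).prod ≤
        ENNReal.ofReal (c Z)) :=
  multiset_convergence_lemma_general S c u hc0 hyp
end
end

section
/- Let Φ be a local interaction on V with ‖Φ‖ := ‖Φ‖_{λ,μ} < ∞ for some λ > 0, μ ≥ 0, let Q be an observable supported in a finite subset Z of V, and let Y ⊆ V be finite. Define the derivation δ_{H_Y}(Q) := i[H_Y, Q]. Then for every m ∈ ℕ: ‖δ^m_{H_Y}(Q)‖ ≤ (2‖Φ‖/λ)^m · ‖Q‖ · e^{λ|Z|} · m!. -/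
set_option linter.unusedVariables false
set_option linter.unusedSectionVars false

open scoped BigOperators ENNReal Matrix.Norms.L2Operator

noncomputable section

variable {V : Type*} [DecidableEq V]

/-- The algebra of observables on the finite region `X`: linear operators on
`(ℂ^D)^{⊗ X}`, realized as matrices indexed by configurations `X → Fin D`. -/
abbrev Mat (D : ℕ) (X : Finset V) : Type _ :=
  Matrix ({x // x ∈ X} → Fin D) ({x // x ∈ X} → Fin D) ℂ

/-- The canonical embedding `𝔄_X → 𝔄_Y`, `Q ↦ Q ⊗ 𝟙_{Y∖X}`, for `X ⊆ Y`. -/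
def incl (D : ℕ) {X Y : Finset V} (h : X ⊆ Y) (M : Mat D X) : Mat D Y :=
  fun f g =>
    if ∀ v : {x // x ∈ Y}, v.1 ∉ X → f v = g v then
      M (fun v => f ⟨v.1, h v.2⟩) (fun v => g ⟨v.1, h v.2⟩)
    else 0

/-- `restr Λ L = Λ ∩ L` as a `Finset`. -/
def restr (Λ : Finset V) (L : Set V) : Finset V :=
  letI := Classical.decPred fun v : V => v ∈ L
  Λ.filter fun v => v ∈ L

theorem restr_subset (Λ : Finset V) (L : Set V) : restr Λ L ⊆ Λ := by
  letI := Classical.decPred fun v : V => v ∈ L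
  exact Finset.filter_subset _ _

/-- The (unnormalized) partial trace of `M ∈ 𝔄_Λ` over `Λ ∖ X`, giving an element of `𝔄_X`
(the reduced operator on `X`; for a state this is the marginal on `X`). -/
def ptr (D : ℕ) {Λ : Finset V} (X : Finset V) (M : Mat D Λ) : Mat D X :=
  fun a b =>
    ∑ h : {v : {x // x ∈ Λ} // v.1 ∉ X} → Fin D,
      M (fun v => if hv : v.1 ∈ X then a ⟨v.1, hv⟩ else h ⟨v, hv⟩)
        (fun v => if hv : v.1 ∈ X then b ⟨v.1, hv⟩ else h ⟨v, hv⟩)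

/-- The Hamiltonian `H_Y = ∑_{X ⊆ Y} Φ_X` of the local interaction `Φ` on the region `Y`. -/
def ham (D : ℕ) (Φ : ∀ X : Finset V, Mat D X) (Y : Finset V) : Mat D Y :=
  ∑ X ∈ Y.powerset.attach, incl D (Finset.mem_powerset.mp X.2) (Φ X.1)

/-- `e^{-β H_Y}`. -/
def gibbsExp (D : ℕ) (Φ : ∀ X : Finset V, Mat D X) (β : ℝ) (Y : Finset V) : Mat D Y :=
  NormedSpace.exp ((-(β : ℂ)) • ham D Φ Y)

/-- The partition function `Z_Y = Tr[e^{-β H_Y}]`. -/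
def partZ (D : ℕ) (Φ : ∀ X : Finset V, Mat D X) (β : ℝ) (Y : Finset V) : ℂ :=
  (gibbsExp D Φ β Y).trace

/-- The Gibbs state `ρ^Y_β = e^{-β H_Y}/Z_Y`. -/
def gibbs (D : ℕ) (Φ : ∀ X : Finset V, Mat D X) (β : ℝ) (Y : Finset V) : Mat D Y :=
  (partZ D Φ β Y)⁻¹ • gibbsExp D Φ β Y

/-- `tr_{Λ∖L}[M] ⊗ 𝟙_{Λ∖L} ∈ 𝔄_Λ` (unnormalized partial trace, re-embedded into `𝔄_Λ`). -/
def ptId (D : ℕ) (L : Set V) {Λ : Finset V} (M : Mat D Λ) : Mat D Λ :=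
  incl D (restr_subset Λ L) (ptr D (restr Λ L) M)

/-- The conditional expectation `E_L = tr_{Λ∖L}[·] ⊗ 𝟙_{Λ∖L} / D^{|Λ∖L|}` on `𝔄_Λ`. -/
def condExp (D : ℕ) (L : Set V) {Λ : Finset V} (M : Mat D Λ) : Mat D Λ :=
  (((D : ℂ) ^ (Λ.card - (restr Λ L).card))⁻¹) • ptId D L M

/-- The interaction norm `‖Φ‖_{λ,μ} = sup_{x ∈ V} ∑_{X ∋ x} ‖Φ_X‖ e^{λ|X| + μ·diam X}`
(as an extended real, so that it is always well defined), where `dd` is the diameter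
function for finite subsets of `V`. -/
def intNormE (D : ℕ) (dd : Finset V → ℝ) (Φ : ∀ X : Finset V, Mat D X)
    (lam mu : ℝ) : ℝ≥0∞ :=
  ⨆ x : V, ∑' X : {X : Finset V // x ∈ X},
    (‖Φ X.1‖₊ : ℝ≥0∞) * ENNReal.ofReal (Real.exp (lam * X.1.card + mu * dd X.1))

/-- The weighted interaction norm `‖Φ‖_w = sup_{x ∈ V} ∑_{X ∋ x} ‖Φ_X‖ e^{w(X)}`. -/
def intNormW (D : ℕ) (Φ : ∀ X : Finset V, Mat D X) (w : Finset V → ℝ) : ℝ≥0∞ :=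
  ⨆ x : V, ∑' X : {X : Finset V // x ∈ X},
    (‖Φ X.1‖₊ : ℝ≥0∞) * ENNReal.ofReal (Real.exp (w X.1))

/-- The system has *strong* local effective Hamiltonians at inverse temperature `β`:
for every `L ⊆ V` there is a local interaction `Φt L` such that (i) `Φt L X` is supported
in `X ∩ L`; (ii) `Φt L X = Φt L' X` whenever `X ∩ L = X ∩ L'`; (iii) for every finite `Λ`,
`-(1/β)·log E_L[e^{-β H_Λ}] = ∑_{X ⊆ Λ} Φt L X`, stated equivalently in exponential form
`E_L[e^{-β H_Λ}] = e^{-β ∑_{X ⊆ Λ} Φt L X}`. -/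
structure IsStrongEffective (D : ℕ) (Φ : ∀ X : Finset V, Mat D X) (β : ℝ)
    (Φt : Set V → ∀ X : Finset V, Mat D X) : Prop where
  herm : ∀ (L : Set V) (X : Finset V), (Φt L X).IsHermitian
  supported : ∀ (L : Set V) (X : Finset V),
    ∃ M : Mat D (restr X L), Φt L X = incl D (restr_subset X L) M
  compatible : ∀ (L L' : Set V) (X : Finset V), restr X L = restr X L' → Φt L X = Φt L' X
  effective : ∀ (L : Set V) (Λ : Finset V),
    condExp D L (gibbsExp D Φ β Λ) = NormedSpace.exp ((-(β : ℂ)) • ham D (Φt L) Λ)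

/-- `∑_{X ⊆ Λ, X ∩ L ≠ ∅} Φ_X ∈ 𝔄_Λ`. -/
def hamTouch (D : ℕ) (Φ : ∀ X : Finset V, Mat D X) (L : Set V) (Λ : Finset V) : Mat D Λ :=
  ∑ X ∈ Λ.powerset.attach,
    if (restr X.1 L).Nonempty then incl D (Finset.mem_powerset.mp X.2) (Φ X.1) else 0

/-- The system has *weak* local effective Hamiltonians at inverse temperature `β`:
for every `L ⊆ V` there is a local interaction `Φh L` such that (i) `Φh L X` is supported
in `X ∩ L`; (ii) `Φh L X = Φh L' X` whenever `X ∩ L = X ∩ L'`; (iii) for every finite `Λ`,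
`-(1/β)·log(tr_{Λ∖L}[e^{-β H_Λ}] ⊗ 𝟙) + (1/β)·log(Z_{Λ∖L})·𝟙 = ∑_{X ⊆ Λ, X∩L ≠ ∅} Φh L X`,
stated equivalently in exponential form
`tr_{Λ∖L}[e^{-β H_Λ}] ⊗ 𝟙 = Z_{Λ∖L} · e^{-β ∑_{X ⊆ Λ, X∩L ≠ ∅} Φh L X}`. -/
structure IsWeakEffective (D : ℕ) (Φ : ∀ X : Finset V, Mat D X) (β : ℝ)
    (Φh : Set V → ∀ X : Finset V, Mat D X) : Prop where
  herm : ∀ (L : Set V) (X : Finset V), (Φh L X).IsHermitian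
  supported : ∀ (L : Set V) (X : Finset V),
    ∃ M : Mat D (restr X L), Φh L X = incl D (restr_subset X L) M
  compatible : ∀ (L L' : Set V) (X : Finset V), restr X L = restr X L' → Φh L X = Φh L' X
  effective : ∀ (L : Set V) (Λ : Finset V),
    ptId D L (gibbsExp D Φ β Λ)
      = partZ D Φ β (Λ \ restr Λ L) • NormedSpace.exp ((-(β : ℂ)) • hamTouch D (Φh L) L Λ)

/-- `ρ_{AC} ρ_A^{-1} ⊗ ρ_C^{-1} - 𝟙 ∈ 𝔄_{A∪C}`, where `ρ_X` denotes the marginal on `X`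
of the Gibbs state on `Λ`, and the tensor product of the two inverses is realized as the
product of their canonical embeddings into `𝔄_{A∪C}`. -/
def mixOp (D : ℕ) (Φ : ∀ X : Finset V, Mat D X) (β : ℝ) {Λ A C : Finset V}
    (hA : A ⊆ Λ) (hC : C ⊆ Λ) : Mat D (A ∪ C) :=
  ptr D (A ∪ C) (gibbs D Φ β Λ) *
      incl D Finset.subset_union_left (ptr D A (gibbs D Φ β Λ))⁻¹ *
      incl D Finset.subset_union_right (ptr D C (gibbs D Φ β Λ))⁻¹ - 1


/-!
Applying `δ = i[H_Y, ·]` to an operator `B` supported in `S` gives a sum over the terms `Φ_X`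
with `X ∩ S ≠ ∅` (the others commute with `B`) of operators supported in `X ∪ S`, of norm at
most `2‖Φ_X‖‖B‖`; by the definition of the interaction norm, `∑_{X ∩ S ≠ ∅} ‖Φ_X‖ e^{λ|X|}` is
at most `|S| ‖Φ‖`. The growth of the support is paid for by the weights `e^{λ|X|}`: by induction
on `k`, whenever `k ε ≤ λ`,
`‖δ^k B‖ ≤ ‖B‖ (2‖Φ‖/(e ε))^k e^{k ε |S|}`,
the factor `|S|` produced at each step being absorbed through `e ε |S| ≤ e^{ε |S|}`.
Taking `ε = λ/m` and using `(m/e)^m ≤ m!` gives the bound.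
-/

variable {D : ℕ}

def restrictConfig {X Λ : Finset V} (h : X ⊆ Λ) (f : {x // x ∈ Λ} → Fin D) :
    {x // x ∈ X} → Fin D :=
  fun v => f ⟨v.1, h v.2⟩

def patchConfig {X Λ : Finset V} (f : {x // x ∈ Λ} → Fin D) (b : {x // x ∈ X} → Fin D) :
    {x // x ∈ Λ} → Fin D :=
  fun v => if hv : v.1 ∈ X then b ⟨v.1, hv⟩ else f v

section Config

variable {X Λ : Finset V} (h : X ⊆ Λ) (f : {x // x ∈ Λ} → Fin D) (b : {x // x ∈ X} → Fin D)

@[simp]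
lemma restrictConfig_patchConfig : restrictConfig h (patchConfig f b) = b :=
  funext fun v => by simp [restrictConfig, patchConfig, v.2]

lemma patchConfig_of_not_mem {v : {x // x ∈ Λ}} (hv : v.1 ∉ X) : patchConfig f b v = f v :=
  dif_neg hv

lemma patchConfig_restrictConfig {k : {x // x ∈ Λ} → Fin D}
    (hfk : ∀ v : {x // x ∈ Λ}, v.1 ∉ X → f v = k v) : patchConfig f (restrictConfig h k) = k := by
  funext v
  by_cases hv : v.1 ∈ X
  · simp [patchConfig, hv, restrictConfig]
  · simp [patchConfig, hv, hfk v hv]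

end Config

lemma incl_apply {X Λ : Finset V} (h : X ⊆ Λ) (M : Mat D X) (f g : {x // x ∈ Λ} → Fin D) :
    incl D h M f g =
      if ∀ v : {x // x ∈ Λ}, v.1 ∉ X → f v = g v then
        M (restrictConfig h f) (restrictConfig h g)
      else 0 := rfl

lemma incl_mul_apply {X Λ : Finset V} (h : X ⊆ Λ) (M : Mat D X) (A : Mat D Λ)
    (f g : {x // x ∈ Λ} → Fin D) :
    (incl D h M * A) f g
      = ∑ b, M (restrictConfig h f) b * A (patchConfig f b) g := by
  rw [Matrix.mul_apply]
  symm
  refine Finset.sum_of_injOn (patchConfig f) ?_ (fun _ _ => Finset.mem_coe.2 (Finset.mem_univ _))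
    ?_ ?_
  · intro b _ b' _ hbb'
    simpa using congrArg (restrictConfig h) hbb'
  · intro k _ hk
    have hoff : ¬ ∀ v : {x // x ∈ Λ}, v.1 ∉ X → f v = k v := fun hfk =>
      hk ⟨restrictConfig h k, Finset.mem_coe.2 (Finset.mem_univ _),
        patchConfig_restrictConfig h f hfk⟩
    rw [incl_apply, if_neg hoff, zero_mul]
  · intro b _
    rw [incl_apply, if_pos fun v hv => (patchConfig_of_not_mem f b hv).symm,
      restrictConfig_patchConfig]

section InclHom

variable {X Λ : Finset V}

lemma incl_one (h : X ⊆ Λ) : incl D h (1 : Mat D X) = 1 := by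
  ext f g
  simp only [incl_apply, Matrix.one_apply]
  by_cases hfg : f = g
  · simp [hfg]
  · have : restrictConfig h f = restrictConfig h g →
        ¬ ∀ v : {x // x ∈ Λ}, v.1 ∉ X → f v = g v := fun hres hoff =>
      hfg (funext fun v => if hv : v.1 ∈ X then congrFun hres ⟨v.1, hv⟩ else hoff v hv)
    grind

lemma incl_mul (h : X ⊆ Λ) (M N : Mat D X) : incl D h (M * N) = incl D h M * incl D h N := by
  ext f g
  rw [incl_mul_apply, incl_apply, Matrix.mul_apply]
  split_ifs with hfg
  · refine Finset.sum_congr rfl fun b _ => ?_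
    rw [incl_apply, if_pos fun v hv => (patchConfig_of_not_mem f b hv).trans (hfg v hv),
      restrictConfig_patchConfig]
  · refine (Finset.sum_eq_zero fun b _ => ?_).symm
    rw [incl_apply, if_neg, mul_zero]
    exact fun hc => hfg fun v hv => (patchConfig_of_not_mem f b hv).symm.trans (hc v hv)

lemma incl_smul (h : X ⊆ Λ) (c : ℂ) (M : Mat D X) : incl D h (c • M) = c • incl D h M := by
  ext f g
  simp only [incl_apply, Matrix.smul_apply]
  split_ifs <;> simp

def inclHom (D : ℕ) (h : X ⊆ Λ) : Mat D X →⋆ₐ[ℂ] Mat D Λ where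
  toFun := incl D h
  map_one' := incl_one h
  map_mul' := incl_mul h
  map_zero' := by ext; simp [incl_apply]
  map_add' M N := by ext; simp only [incl_apply, Matrix.add_apply]; split_ifs <;> simp
  commutes' c := by
    simp only [Algebra.algebraMap_eq_smul_one, incl_smul, incl_one]
  map_star' M := by
    ext f g
    have hsymm : (∀ v : {x // x ∈ Λ}, v.1 ∉ X → g v = f v) ↔
        ∀ v : {x // x ∈ Λ}, v.1 ∉ X → f v = g v :=
      forall₂_congr fun _ _ => eq_comm
    simp only [Matrix.star_apply, incl_apply, hsymm]
    split_ifs <;> simp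

@[simp]
lemma inclHom_apply (h : X ⊆ Λ) (M : Mat D X) : inclHom D h M = incl D h M := rfl

lemma incl_zero (h : X ⊆ Λ) : incl D h (0 : Mat D X) = 0 :=
  map_zero (inclHom D h)

end InclHom

lemma norm_incl_le {X Λ : Finset V} (h : X ⊆ Λ) (M : Mat D X) : ‖incl D h M‖ ≤ ‖M‖ :=
  NonUnitalStarAlgHom.norm_apply_le (inclHom D h) M

lemma incl_incl {X Y Λ : Finset V} (hXY : X ⊆ Y) (hYΛ : Y ⊆ Λ) (M : Mat D X) :
    incl D hYΛ (incl D hXY M) = incl D (hXY.trans hYΛ) M := by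
  ext f g
  by_cases hY : ∀ v : {x // x ∈ Λ}, v.1 ∉ Y → f v = g v
  · have hX : (∀ w : {x // x ∈ Y}, w.1 ∉ X → restrictConfig hYΛ f w = restrictConfig hYΛ g w) ↔
        ∀ v : {x // x ∈ Λ}, v.1 ∉ X → f v = g v :=
      ⟨fun hX v hv => if hvY : v.1 ∈ Y then hX ⟨v.1, hvY⟩ hv else hY v hvY,
        fun hX w hw => hX _ hw⟩
    simp only [incl_apply, if_pos hY, hX]
    rfl
  · rw [incl_apply, if_neg hY, incl_apply, if_neg fun hX => hY fun v hv => hX v (hv <| hXY ·)]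

lemma incl_mul_incl_apply_of_disjoint {X S Λ : Finset V} (hX : X ⊆ Λ) (hS : S ⊆ Λ)
    (hXS : Disjoint X S) (M : Mat D X) (C : Mat D S) (f g : {x // x ∈ Λ} → Fin D) :
    (incl D hX M * incl D hS C) f g =
      if ∀ v : {x // x ∈ Λ}, v.1 ∉ X → v.1 ∉ S → f v = g v then
        M (restrictConfig hX f) (restrictConfig hX g) *
          C (restrictConfig hS f) (restrictConfig hS g)
      else 0 := by
  have hSX : ∀ v : V, v ∈ S → v ∉ X := fun _ hv => Finset.disjoint_right.mp hXS hv
  rw [incl_mul_apply, Finset.sum_eq_single (restrictConfig hX g)]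
  · have hcond : (∀ v : {x // x ∈ Λ}, v.1 ∉ S → patchConfig f (restrictConfig hX g) v = g v) ↔
        ∀ v : {x // x ∈ Λ}, v.1 ∉ X → v.1 ∉ S → f v = g v := by
      refine forall_congr' fun v => ?_
      by_cases hv : v.1 ∈ X
      · simp [patchConfig, restrictConfig, hv]
      · simp [patchConfig_of_not_mem _ _ hv, hv]
    have hres : restrictConfig hS (patchConfig f (restrictConfig hX g)) = restrictConfig hS f :=
      funext fun w => patchConfig_of_not_mem _ _ (hSX w.1 w.2)
    simp only [incl_apply, hcond, hres]
    split_ifs <;> simp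
  · intro b _ hb
    obtain ⟨w, hw⟩ := Function.ne_iff.mp hb
    refine mul_eq_zero_of_right _ (if_neg fun hc => hw ?_)
    have := hc ⟨w.1, hX w.2⟩ (Finset.disjoint_left.mp hXS w.2)
    simpa [patchConfig, restrictConfig, w.2] using this
  · simp

attribute [local instance 100] LieRing.ofAssociativeRing

section Bracket

variable {X S Λ : Finset V}

lemma incl_lie (h : X ⊆ Λ) (M N : Mat D X) :
    incl D h ⁅M, N⁆ = ⁅incl D h M, incl D h N⁆ :=
  LieHom.map_lie (inclHom D h).toAlgHom.toLieHom M N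

lemma commute_incl_of_disjoint (hX : X ⊆ Λ) (hS : S ⊆ Λ) (hXS : Disjoint X S)
    (M : Mat D X) (C : Mat D S) : Commute (incl D hX M) (incl D hS C) := by
  show _ = _
  ext f g
  rw [incl_mul_incl_apply_of_disjoint hX hS hXS, incl_mul_incl_apply_of_disjoint hS hX hXS.symm,
    mul_comm]
  have hswap : (∀ v : {x // x ∈ Λ}, v.1 ∉ S → v.1 ∉ X → f v = g v) ↔
      ∀ v : {x // x ∈ Λ}, v.1 ∉ X → v.1 ∉ S → f v = g v :=
    forall_congr' fun _ => imp.swap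
  simp only [hswap]

lemma norm_lie_incl_incl_le (hX : X ⊆ Λ) (hS : S ⊆ Λ) (M : Mat D X) (C : Mat D S) :
    ‖⁅incl D hX M, incl D hS C⁆‖ ≤ 2 * ‖M‖ * ‖C‖ := by
  rw [Ring.lie_def]
  calc _ ≤ ‖incl D hX M‖ * ‖incl D hS C‖ + ‖incl D hS C‖ * ‖incl D hX M‖ :=
        (norm_sub_le _ _).trans (add_le_add (norm_mul_le _ _) (norm_mul_le _ _))
    _ ≤ ‖M‖ * ‖C‖ + ‖C‖ * ‖M‖ := by
        gcongr <;> exact norm_incl_le _ _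
    _ = 2 * ‖M‖ * ‖C‖ := by ring

end Bracket

lemma incl_ham {Y Λ : Finset V} (hY : Y ⊆ Λ) (Φ : ∀ X : Finset V, Mat D X) :
    incl D hY (ham D Φ Y) =
      ∑ X ∈ Y.powerset.attach, incl D ((Finset.mem_powerset.mp X.2).trans hY) (Φ X.1) := by
  rw [ham, ← inclHom_apply, map_sum]
  exact Finset.sum_congr rfl fun X _ => incl_incl _ hY _

lemma lie_incl_ham {Y S Λ : Finset V} (hY : Y ⊆ Λ) (hS : S ⊆ Λ) (Φ : ∀ X : Finset V, Mat D X)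
    (B : Mat D S) :
    ⁅incl D hY (ham D Φ Y), incl D hS B⁆ =
      ∑ X ∈ Y.powerset.attach,
        incl D (Finset.union_subset ((Finset.mem_powerset.mp X.2).trans hY) hS)
          ⁅(incl D Finset.subset_union_left (Φ X.1) : Mat D (X.1 ∪ S)),
            incl D Finset.subset_union_right B⁆ := by
  rw [incl_ham, sum_lie]
  refine Finset.sum_congr rfl fun X _ => ?_
  rw [incl_lie, incl_incl, incl_incl]

lemma sum_norm_mul_exp_le_intNormE (dd : Finset V → ℝ) (hdd : ∀ X, 0 ≤ dd X) (Φ : ∀ X : Finset V, Mat D X)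
    {lam mu : ℝ} (hmu : 0 ≤ mu) (hfin : intNormE D dd Φ lam mu ≠ ⊤) {x : V}
    {F : Finset (Finset V)} (hF : ∀ X ∈ F, x ∈ X) :
    ∑ X ∈ F, ‖Φ X‖ * Real.exp (lam * X.card) ≤ (intNormE D dd Φ lam mu).toReal := by
  refine (ENNReal.ofReal_le_iff_le_toReal hfin).1 ?_
  calc ENNReal.ofReal (∑ X ∈ F, ‖Φ X‖ * Real.exp (lam * X.card))
      = ∑ X ∈ F.subtype (x ∈ ·),
          (‖Φ X.1‖₊ : ℝ≥0∞) * ENNReal.ofReal (Real.exp (lam * X.1.card)) := by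
        rw [ENNReal.ofReal_sum_of_nonneg fun X _ => by positivity,
          ← Finset.sum_subtype_of_mem
            (fun X => ENNReal.ofReal (‖Φ X‖ * Real.exp (lam * X.card))) hF]
        refine Finset.sum_congr rfl fun X _ => ?_
        rw [ENNReal.ofReal_mul (norm_nonneg _), ← coe_nnnorm, ENNReal.ofReal_coe_nnreal]
    _ ≤ ∑ X ∈ F.subtype (x ∈ ·),
          (‖Φ X.1‖₊ : ℝ≥0∞) * ENNReal.ofReal (Real.exp (lam * X.1.card + mu * dd X.1)) := by
        gcongr with X
        exact le_add_of_nonneg_right (mul_nonneg hmu (hdd X.1))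
    _ ≤ ∑' X : {X : Finset V // x ∈ X},
          (‖Φ X.1‖₊ : ℝ≥0∞) * ENNReal.ofReal (Real.exp (lam * X.1.card + mu * dd X.1)) :=
        ENNReal.sum_le_tsum _
    _ ≤ intNormE D dd Φ lam mu :=
        le_iSup (fun x : V => ∑' X : {X : Finset V // x ∈ X},
          (‖Φ X.1‖₊ : ℝ≥0∞) * ENNReal.ofReal (Real.exp (lam * X.1.card + mu * dd X.1))) x

lemma sum_touching_le_card_mul_intNormE (dd : Finset V → ℝ) (hdd : ∀ X, 0 ≤ dd X)
    (Φ : ∀ X : Finset V, Mat D X) {lam mu : ℝ} (hmu : 0 ≤ mu)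
    (hfin : intNormE D dd Φ lam mu ≠ ⊤) (Y S : Finset V) :
    ∑ X ∈ Y.powerset with (X ∩ S).Nonempty, ‖Φ X‖ * Real.exp (lam * X.card)
      ≤ S.card * (intNormE D dd Φ lam mu).toReal := by
  set w : Finset V → ℝ := fun X => ‖Φ X‖ * Real.exp (lam * X.card)
  have hw : ∀ X, 0 ≤ w X := fun X => by positivity
  calc ∑ X ∈ Y.powerset with (X ∩ S).Nonempty, w X
      ≤ ∑ X ∈ Y.powerset with (X ∩ S).Nonempty, ∑ x ∈ S, if x ∈ X then w X else 0 := by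
        refine Finset.sum_le_sum fun X hX => ?_
        obtain ⟨x, hx⟩ := (Finset.mem_filter.mp hX).2
        rw [Finset.mem_inter] at hx
        calc w X = if x ∈ X then w X else 0 := (if_pos hx.1).symm
          _ ≤ _ := Finset.single_le_sum (fun _ _ => ite_nonneg (hw X) le_rfl) hx.2
    _ = ∑ x ∈ S, ∑ X ∈ Y.powerset with (X ∩ S).Nonempty ∧ x ∈ X, w X := by
        rw [Finset.sum_comm]
        simp only [Finset.sum_filter, ite_and]
    _ ≤ ∑ _x ∈ S, (intNormE D dd Φ lam mu).toReal :=
        Finset.sum_le_sum fun x _ =>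
          sum_norm_mul_exp_le_intNormE dd hdd Φ hmu hfin fun X hX => (Finset.mem_filter.mp hX).2.2
    _ = S.card * (intNormE D dd Φ lam mu).toReal := by
        rw [Finset.sum_const, nsmul_eq_mul]

lemma mul_le_div_mul_exp {a ε : ℝ} (ha : 0 ≤ a) (hε : 0 < ε) (x : ℝ) :
    a * x ≤ a / (Real.exp 1 * ε) * Real.exp (ε * x) := by
  have hx : x ≤ Real.exp (ε * x) / (Real.exp 1 * ε) := by
    rw [le_div_iff₀ (by positivity)]
    linarith [Real.exp_one_mul_le_exp (x := ε * x)]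
  calc a * x ≤ a * (Real.exp (ε * x) / (Real.exp 1 * ε)) := by gcongr
    _ = a / (Real.exp 1 * ε) * Real.exp (ε * x) := by ring

lemma pow_div_exp_one_le_factorial (n : ℕ) : ((n : ℝ) / Real.exp 1) ^ n ≤ n.factorial := by
  have h := Real.pow_div_factorial_le_exp _ (Nat.cast_nonneg n) n
  rw [div_le_iff₀ (by positivity)] at h
  rw [div_pow, Real.exp_one_pow, div_le_iff₀ (Real.exp_pos _)]
  linarith

section HamiltonianDerivation

variable {X S Λ : Finset V}

lemma norm_ad_pow_incl_lie_incl_le (H : Mat D Λ) {k : ℕ} {K a lam : ℝ} (hK : 0 ≤ K)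
    (ha : 0 ≤ a) (hal : a ≤ lam)
    (hk : ∀ (T : Finset V) (hT : T ⊆ Λ) (C : Mat D T),
      ‖(LieAlgebra.ad ℂ (Mat D Λ) H ^ k) (incl D hT C)‖ ≤ ‖C‖ * K * Real.exp (a * T.card))
    (hX : X ⊆ Λ) (hS : S ⊆ Λ) (A : Mat D X) (B : Mat D S) :
    ‖(LieAlgebra.ad ℂ (Mat D Λ) H ^ k) (incl D (Finset.union_subset hX hS)
        ⁅(incl D Finset.subset_union_left A : Mat D (X ∪ S)), incl D Finset.subset_union_right B⁆)‖
      ≤ 2 * ‖B‖ * K * Real.exp (a * S.card) *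
          if (X ∩ S).Nonempty then ‖A‖ * Real.exp (lam * X.card) else 0 := by
  split_ifs with hXS
  · have hexp : Real.exp (a * (X ∪ S).card) ≤ Real.exp (lam * X.card) * Real.exp (a * S.card) := by
      rw [← Real.exp_add, Real.exp_le_exp]
      have hcard : ((X ∪ S).card : ℝ) ≤ X.card + S.card := by
        exact_mod_cast Finset.card_union_le X S
      nlinarith [mul_le_mul_of_nonneg_right hal (Nat.cast_nonneg (α := ℝ) X.card)]
    calc _ ≤ ‖⁅(incl D Finset.subset_union_left A : Mat D (X ∪ S)),
              incl D Finset.subset_union_right B⁆‖ * K * Real.exp (a * (X ∪ S).card) := hk _ _ _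
      _ ≤ (2 * ‖A‖ * ‖B‖) * K * (Real.exp (lam * X.card) * Real.exp (a * S.card)) := by
          gcongr
          exact norm_lie_incl_incl_le _ _ _ _
      _ = 2 * ‖B‖ * K * Real.exp (a * S.card) * (‖A‖ * Real.exp (lam * X.card)) := by ring
  · have hdisj : Disjoint X S := Finset.disjoint_iff_inter_eq_empty.mpr
      (Finset.not_nonempty_iff_eq_empty.mp hXS)
    rw [(commute_incl_of_disjoint _ _ hdisj _ _).lie_eq, incl_zero, map_zero, norm_zero, mul_zero]

variable {Y : Finset V} (hY : Y ⊆ Λ) (Φ : ∀ X : Finset V, Mat D X) {lam N : ℝ}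
  (hΦ : ∀ S : Finset V,
    ∑ X ∈ Y.powerset with (X ∩ S).Nonempty, ‖Φ X‖ * Real.exp (lam * X.card) ≤ S.card * N)
include hΦ

lemma norm_ad_ham_pow_succ_incl_le {k : ℕ} {K a : ℝ} (hK : 0 ≤ K) (ha : 0 ≤ a) (hal : a ≤ lam)
    (hk : ∀ (T : Finset V) (hT : T ⊆ Λ) (C : Mat D T),
      ‖(LieAlgebra.ad ℂ (Mat D Λ) (incl D hY (ham D Φ Y)) ^ k) (incl D hT C)‖
        ≤ ‖C‖ * K * Real.exp (a * T.card))
    (hS : S ⊆ Λ) (B : Mat D S) :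
    ‖(LieAlgebra.ad ℂ (Mat D Λ) (incl D hY (ham D Φ Y)) ^ (k + 1)) (incl D hS B)‖
      ≤ 2 * ‖B‖ * K * Real.exp (a * S.card) * (S.card * N) := by
  set c := 2 * ‖B‖ * K * Real.exp (a * S.card)
  calc _ ≤ ∑ X ∈ Y.powerset.attach,
            ‖(LieAlgebra.ad ℂ (Mat D Λ) (incl D hY (ham D Φ Y)) ^ k)
              (incl D (Finset.union_subset ((Finset.mem_powerset.mp X.2).trans hY) hS)
                ⁅(incl D Finset.subset_union_left (Φ X.1) : Mat D (X.1 ∪ S)),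
                  incl D Finset.subset_union_right B⁆)‖ := by
        rw [pow_succ, Module.End.mul_apply, LieAlgebra.ad_apply, lie_incl_ham, map_sum]
        exact norm_sum_le _ _
    _ ≤ ∑ X ∈ Y.powerset.attach,
          c * if (X.1 ∩ S).Nonempty then ‖Φ X.1‖ * Real.exp (lam * X.1.card) else 0 :=
        Finset.sum_le_sum fun X _ => norm_ad_pow_incl_lie_incl_le _ hK ha hal hk
          ((Finset.mem_powerset.mp X.2).trans hY) hS _ B
    _ = c * ∑ X ∈ Y.powerset with (X ∩ S).Nonempty, ‖Φ X‖ * Real.exp (lam * X.card) := by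
        rw [← Finset.mul_sum, Finset.sum_filter,
          Finset.sum_attach Y.powerset fun X =>
            if (X ∩ S).Nonempty then ‖Φ X‖ * Real.exp (lam * X.card) else 0]
    _ ≤ c * (S.card * N) := by gcongr; exact hΦ S

lemma norm_ad_ham_pow_incl_le (hN : 0 ≤ N) {ε : ℝ} (hε : 0 < ε) (k : ℕ) (hk : k * ε ≤ lam)
    (hS : S ⊆ Λ) (B : Mat D S) :
    ‖(LieAlgebra.ad ℂ (Mat D Λ) (incl D hY (ham D Φ Y)) ^ k) (incl D hS B)‖
      ≤ ‖B‖ * (2 * N / (Real.exp 1 * ε)) ^ k * Real.exp (k * ε * S.card) := by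
  induction k generalizing S with
  | zero => simpa using norm_incl_le hS B
  | succ k ih =>
    set R := 2 * N / (Real.exp 1 * ε)
    have hkε : k * ε ≤ lam := by push_cast at hk; linarith
    calc _ ≤ 2 * ‖B‖ * R ^ k * Real.exp (k * ε * S.card) * (S.card * N) :=
          norm_ad_ham_pow_succ_incl_le hY Φ hΦ (by positivity) (by positivity) hkε
            (fun T hT C => ih hkε hT C) hS B
      _ = ‖B‖ * R ^ k * Real.exp (k * ε * S.card) * (2 * N * S.card) := by ring
      _ ≤ ‖B‖ * R ^ k * Real.exp (k * ε * S.card) * (R * Real.exp (ε * S.card)) :=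
          mul_le_mul_of_nonneg_left (mul_le_div_mul_exp (by positivity) hε _) (by positivity)
      _ = ‖B‖ * R ^ (k + 1) * Real.exp ((k + 1 : ℕ) * ε * S.card) := by
          rw [pow_succ, Nat.cast_succ, add_mul, add_mul, one_mul, Real.exp_add]
          ring

end HamiltonianDerivation

theorem derivation_power_bound_general
    {V : Type*} [DecidableEq V] [MetricSpace V] (D : ℕ)
    (Φ : ∀ X : Finset V, Mat D X)
    (lam mu : ℝ) (hlam : 0 < lam) (hmu : 0 ≤ mu)
    (hfin : intNormE D (fun X : Finset V => Metric.diam (X : Set V)) Φ lam mu ≠ ⊤)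
    (Z : Finset V) (Q : Mat D Z) (Y : Finset V) (m : ℕ) :
    ‖(fun M : Mat D (Z ∪ Y) =>
          Complex.I • (incl D Finset.subset_union_right (ham D Φ Y) * M -
            M * incl D Finset.subset_union_right (ham D Φ Y)))^[m]
        (incl D Finset.subset_union_left Q)‖ ≤
      (2 * (intNormE D (fun X : Finset V => Metric.diam (X : Set V)) Φ lam mu).toReal / lam) ^ m *
        ‖Q‖ * Real.exp (lam * Z.card) * m.factorial := by
  set N := (intNormE D (fun X : Finset V => Metric.diam (X : Set V)) Φ lam mu).toReal
  set H := incl D Finset.subset_union_right (ham D Φ Y)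
  have hδ : (fun M : Mat D (Z ∪ Y) => Complex.I • (H * M - M * H))^[m] =
      ⇑((Complex.I • LieAlgebra.ad ℂ (Mat D (Z ∪ Y)) H) ^ m) := by
    rw [Module.End.coe_pow]
    rfl
  rw [hδ, smul_pow, LinearMap.smul_apply, norm_smul, norm_pow, Complex.norm_I, one_pow, one_mul]
  rcases m.eq_zero_or_pos with rfl | hm
  · simpa using (norm_incl_le _ Q).trans
      (le_mul_of_one_le_right (norm_nonneg Q) (Real.one_le_exp (by positivity)))
  have hmε : (m : ℝ) * (lam / m) = lam := mul_div_cancel₀ lam (by positivity)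
  calc _ ≤ ‖Q‖ * (2 * N / (Real.exp 1 * (lam / m))) ^ m * Real.exp (m * (lam / m) * Z.card) :=
        norm_ad_ham_pow_incl_le _ Φ
          (sum_touching_le_card_mul_intNormE _ (fun _ => Metric.diam_nonneg) Φ hmu hfin Y)
          ENNReal.toReal_nonneg (by positivity) m hmε.le Finset.subset_union_left Q
    _ = (2 * N / lam) ^ m * ‖Q‖ * Real.exp (lam * Z.card) * ((m : ℝ) / Real.exp 1) ^ m := by
        rw [hmε, mul_div_assoc', div_div_eq_mul_div]
        ring
    _ ≤ (2 * N / lam) ^ m * ‖Q‖ * Real.exp (lam * Z.card) * m.factorial := by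
        gcongr
        exact pow_div_exp_one_le_factorial m

/-- (Eq. (2.9).) Let `Φ` be a local interaction on `V` with
`‖Φ‖ = ‖Φ‖_{λ,μ} < ∞` for `λ > 0, μ ≥ 0`, `Q` an observable supported in a finite
`Z ⊆ V`, and `Y ⊆ V` finite. With `δ_{H_Y}(Q) = i[H_Y, Q]`, for every `m ∈ ℕ`:
`‖δ^m_{H_Y}(Q)‖ ≤ (2‖Φ‖/λ)^m ‖Q‖ e^{λ|Z|} m!` (all operators realized in `𝔄_{Z∪Y}`). -/
theorem derivation_power_bound
    {V : Type*} [DecidableEq V] [MetricSpace V] (D : ℕ)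
    (Φ : ∀ X : Finset V, Mat D X) (hherm : ∀ X, (Φ X).IsHermitian)
    (lam mu : ℝ) (hlam : 0 < lam) (hmu : 0 ≤ mu)
    (hfin : intNormE D (fun X : Finset V => Metric.diam (X : Set V)) Φ lam mu ≠ ⊤)
    (Z : Finset V) (Q : Mat D Z) (Y : Finset V) (m : ℕ) :
    ‖(fun M : Mat D (Z ∪ Y) =>
          Complex.I • (incl D Finset.subset_union_right (ham D Φ Y) * M -
            M * incl D Finset.subset_union_right (ham D Φ Y)))^[m]
        (incl D Finset.subset_union_left Q)‖ ≤
      (2 * (intNormE D (fun X : Finset V => Metric.diam (X : Set V)) Φ lam mu).toReal / lam) ^ m *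
        ‖Q‖ * Real.exp (lam * Z.card) * m.factorial :=
  derivation_power_bound_general D Φ lam mu hlam hmu hfin Z Q Y m
end
end

section
/- Let V = ℤ^g endowed with the distance induced by any ℓ^p norm (1 ≤ p ≤ ∞), let μ > 0, and let A and X be finite disjoint subsets of V. Then Σ_{v∈A} e^{−μ·dist(v,X)} ≤ ν · |∂A| · e^{−(μ/2)·dist(A,X)}, where ν := ( sup_{k∈ℕ} (2k+1)^g e^{−μk/2} ) · ( Σ_{j≥0} e^{−μj/2} ) is a constant depending only on μ and g. -/
set_option linter.unusedVariables false
set_option linter.unusedSectionVars false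

open scoped BigOperators ENNReal Matrix.Norms.L2Operator

noncomputable section


/-- The `ℓ^p` distance on `ℤ^g`, induced by the `ℓ^p` norm on `ℝ^g`. -/
def pdist (g : ℕ) (p : ℝ≥0∞) [Fact (1 ≤ p)] (x y : Fin g → ℤ) : ℝ :=
  dist ((WithLp.equiv p (Fin g → ℝ)).symm fun i => (x i : ℝ))
    ((WithLp.equiv p (Fin g → ℝ)).symm fun i => (y i : ℝ))

/-- The distance `dist(v,X) = inf_{u∈X} dist(v,u)` from a point to a set, valued in
`[0,∞]` so that the distance to the empty set is `∞`. -/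
def eSetDistP (g : ℕ) (p : ℝ≥0∞) [Fact (1 ≤ p)] (v : Fin g → ℤ)
    (X : Set (Fin g → ℤ)) : ℝ≥0∞ :=
  ⨅ u ∈ X, ENNReal.ofReal (pdist g p v u)

/-- The distance `dist(A,X) = inf_{v∈A} dist(v,X)` between two sets, valued in `[0,∞]`. -/
def eSetSetDistP (g : ℕ) (p : ℝ≥0∞) [Fact (1 ≤ p)] (A X : Set (Fin g → ℤ)) : ℝ≥0∞ :=
  ⨅ v ∈ A, eSetDistP g p v X

open Classical in
/-- `e^{-μ t}` for `t ∈ [0,∞]`, with the convention `e^{-μ·∞} = 0`. -/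
noncomputable def expNegMul (μ : ℝ) (t : ℝ≥0∞) : ℝ :=
  if t = ⊤ then 0 else Real.exp (-(μ * t.toReal))

open Classical in
/-- The inner `1`-boundary `∂A = {v ∈ A : dist(v, V∖A) ≤ 1}`. -/
noncomputable def pBdry (g : ℕ) (p : ℝ≥0∞) [Fact (1 ≤ p)]
    (A : Finset (Fin g → ℤ)) : Finset (Fin g → ℤ) :=
  A.filter fun v => eSetDistP g p v {u | u ∉ (A : Set (Fin g → ℤ))} ≤ 1

/-!
Let `v ∈ A` and let `u ∈ X` be a nearest point. Among the points of `A` in the coordinate box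
spanned by `v` and `u`, one closest to `u` has a lattice neighbour outside `A`, so it is a point
`w ∈ ∂A` with `‖v - w‖_∞ ≤ dist(v, X)`. With `D = dist(A, X)` this gives
`e^{-μ dist(v,X)} ≤ ∑_{w ∈ ∂A} e^{-μ max(‖v - w‖_∞, D)}`, and it remains to bound
`∑_v e^{-μ max(‖v - w‖_∞, D)}` for a fixed `w`. At most `(2j+1)^g` points satisfy
`‖v - w‖_∞ ≤ j`, and `(2j+1)^g ≤ S e^{μj/2}` for the supremum `S` in `ν`. Writing `q = e^{-μ/2}`,
the layer-cake identity `q^{2m} = (1 - q²) ∑_{j ≥ m} q^{2j}` turns the sum into one against these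
cumulative counts; splitting the summand at `⌊D⌋ + 1` and using `q^x + q^{1-x} ≤ 1 + q` for
`0 ≤ x ≤ 1` yields the bound `S (1 + q) q^D`, and `1 + q ≤ ∑_j q^j`.
-/

open Finset Filter

section Lattice

variable {g : ℕ} {p : ℝ≥0∞} [Fact (1 ≤ p)]

def supDist (v w : Fin g → ℤ) : ℕ :=
  univ.sup fun j => (v j - w j).natAbs

theorem natAbs_sub_le_pdist (x y : Fin g → ℤ) (i : Fin g) :
    ((x i - y i).natAbs : ℝ) ≤ pdist g p x y := by
  have hcoord := dist_le_pi_dist (fun j => (x j : ℝ)) (fun j => (y j : ℝ)) i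
  have hlip := (PiLp.lipschitzWith_ofLp p (fun _ : Fin g => ℝ)).dist_le_mul
    (WithLp.toLp p fun j => (x j : ℝ)) (WithLp.toLp p fun j => (y j : ℝ))
  rw [NNReal.coe_one, one_mul] at hlip
  rw [Nat.cast_natAbs, Int.cast_abs, Int.cast_sub, ← Real.dist_eq]
  exact hcoord.trans hlip

theorem supDist_le_pdist (x y : Fin g → ℤ) : (supDist x y : ℝ) ≤ pdist g p x y := by
  have hfloor : supDist x y ≤ ⌊pdist g p x y⌋₊ :=
    Finset.sup_le fun i _ => Nat.le_floor (natAbs_sub_le_pdist x y i)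
  exact (Nat.cast_le.mpr hfloor).trans (Nat.floor_le dist_nonneg)

theorem pdist_add_single (w : Fin g → ℤ) (i : Fin g) (ε : ℤ) :
    pdist g p w (w + Pi.single i ε) = |(ε : ℝ)| := by
  have hcast : (fun j => (((w + Pi.single i ε : Fin g → ℤ) j : ℤ) : ℝ)) =
      (fun j => (w j : ℝ)) + Pi.single i (ε : ℝ) := by
    ext j
    by_cases hj : j = i
    · subst hj; simp
    · simp [hj]
  rw [pdist, WithLp.equiv_symm_apply, hcast, dist_comm, dist_eq_norm,
    WithLp.toLp_add, add_sub_cancel_left, PiLp.toLp_single, PiLp.norm_single, Real.norm_eq_abs]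

theorem card_filter_supDist_le (s : Finset (Fin g → ℤ)) (w : Fin g → ℤ) (k : ℕ) :
    #{v ∈ s | supDist v w ≤ k} ≤ (2 * k + 1) ^ g := by
  have hsub : {v ∈ s | supDist v w ≤ k} ⊆
      Fintype.piFinset fun j => Icc (w j - k) (w j + k) := by
    intro v hv
    have hk := (mem_filter.mp hv).2
    simp only [supDist, Finset.sup_le_iff, mem_univ, true_implies] at hk
    simp only [Fintype.mem_piFinset, mem_Icc]
    intro j
    have := hk j
    omega
  refine (card_le_card hsub).trans_eq ?_
  have hIcc : ∀ j, #(Icc (w j - k) (w j + k)) = 2 * k + 1 := fun j => by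
    rw [Int.card_Icc]; omega
  simp only [Fintype.card_piFinset, hIcc, prod_const, card_univ, Fintype.card_fin]

theorem exists_mem_add_single_notMem {ι : Type*} [Fintype ι] [DecidableEq ι]
    {A : Finset (ι → ℤ)} {u v : ι → ℤ} (hv : v ∈ A) (hu : u ∉ A) :
    ∃ w ∈ A, (∃ i, ∃ ε : ℤ, |ε| = 1 ∧ w + Pi.single i ε ∉ A) ∧
      ∀ j, (v j - w j).natAbs ≤ (v j - u j).natAbs := by
  -- Take `w ∈ A` in the box spanned by `v` and `u` that is `ℓ¹`-closest to `u`; one step from `w`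
  -- towards `u` stays in the box, hence leaves `A`.
  let box := Fintype.piFinset fun j => uIcc (v j) (u j)
  have hvbox : v ∈ box := Fintype.mem_piFinset.mpr fun j => left_mem_uIcc
  obtain ⟨w, hw, hmin⟩ := exists_min_image {w ∈ A | w ∈ box}
    (fun w => ∑ j, (w j - u j).natAbs) ⟨v, mem_filter.mpr ⟨hv, hvbox⟩⟩
  obtain ⟨hwA, hwbox⟩ := mem_filter.mp hw
  have hwbox' : ∀ j, min (v j) (u j) ≤ w j ∧ w j ≤ max (v j) (u j) := fun j =>
    mem_uIcc.mp (Fintype.mem_piFinset.mp hwbox j)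
  obtain ⟨i, hi⟩ : ∃ i, w i ≠ u i := by
    by_contra! h
    exact hu (funext h ▸ hwA)
  set ε : ℤ := if w i < u i then 1 else -1 with hε
  have hstep : ∀ j, (w + Pi.single i ε : ι → ℤ) j = w j + if j = i then ε else 0 := fun j => by
    simp [Pi.single_apply]
  refine ⟨w, hwA, ⟨i, ε, by rw [hε]; split_ifs <;> simp, fun hA => ?_⟩, fun j => ?_⟩
  · have hbox : w + Pi.single i ε ∈ box := by
      refine Fintype.mem_piFinset.mpr fun j => mem_uIcc.mpr ?_
      have := hwbox' j
      rw [hstep]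
      split_ifs at * <;> subst_vars <;> omega
    refine (hmin _ (mem_filter.mpr ⟨hA, hbox⟩)).not_gt
      (sum_lt_sum (fun j _ => ?_) ⟨i, mem_univ _, ?_⟩)
    · rw [hstep]
      split_ifs <;> subst_vars <;> omega
    · rw [hstep, if_pos rfl, hε]
      split_ifs <;> omega
  · have := hwbox' j
    omega

theorem mem_pBdry_of_add_single_notMem {A : Finset (Fin g → ℤ)} {w : Fin g → ℤ} {i : Fin g}
    {ε : ℤ} (hw : w ∈ A) (hε : |ε| = 1) (hout : w + Pi.single i ε ∉ A) : w ∈ pBdry g p A := by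
  refine mem_filter.mpr ⟨hw, (iInf₂_le (w + Pi.single i ε) hout).trans ?_⟩
  rw [pdist_add_single, ← Int.cast_abs, hε, Int.cast_one, ENNReal.ofReal_one]

theorem exists_mem_pBdry_supDist_le {A : Finset (Fin g → ℤ)} {u v : Fin g → ℤ} (hv : v ∈ A)
    (hu : u ∉ A) : ∃ w ∈ pBdry g p A, (supDist v w : ℝ) ≤ pdist g p v u := by
  obtain ⟨w, hwA, ⟨i, ε, hε, hout⟩, hwu⟩ := exists_mem_add_single_notMem hv hu
  refine ⟨w, mem_pBdry_of_add_single_notMem hwA hε hout, le_trans ?_ (supDist_le_pdist v u)⟩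
  exact_mod_cast Finset.sup_mono_fun fun j _ => hwu j

theorem eSetDistP_ne_top {X : Set (Fin g → ℤ)} {u : Fin g → ℤ} (hu : u ∈ X) (v : Fin g → ℤ) :
    eSetDistP g p v X ≠ ⊤ :=
  ne_top_of_le_ne_top ENNReal.ofReal_ne_top (iInf₂_le u hu)

theorem exists_mem_pBdry_supDist_le_eSetDistP {A X : Finset (Fin g → ℤ)} (hAX : Disjoint A X)
    (hX : X.Nonempty) {v : Fin g → ℤ} (hv : v ∈ A) :
    ∃ w ∈ pBdry g p A, (supDist v w : ℝ) ≤ (eSetDistP g p v X).toReal := by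
  obtain ⟨u, hu, hmin⟩ := exists_min_image X (pdist g p v) hX
  obtain ⟨w, hw, hvw⟩ := exists_mem_pBdry_supDist_le (p := p) hv (disjoint_right.mp hAX hu)
  refine ⟨w, hw, hvw.trans ?_⟩
  rw [← ENNReal.ofReal_le_iff_le_toReal (eSetDistP_ne_top (mem_coe.mpr hu) v)]
  exact le_iInf₂ fun u' hu' => ENNReal.ofReal_le_ofReal (hmin u' hu')

theorem expNegMul_nonneg (μ : ℝ) (t : ℝ≥0∞) : 0 ≤ expNegMul μ t := by
  unfold expNegMul
  split_ifs <;> positivity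

theorem expNegMul_eSetDistP_le_sum_pBdry {A X : Finset (Fin g → ℤ)} (hAX : Disjoint A X)
    (hX : X.Nonempty) {μ : ℝ} (hμ : 0 ≤ μ) {v : Fin g → ℤ} (hv : v ∈ A) :
    expNegMul μ (eSetDistP g p v X) ≤ ∑ w ∈ pBdry g p A,
      Real.exp (-(μ * max (supDist v w : ℝ) (eSetSetDistP g p A X).toReal)) := by
  obtain ⟨u, hu⟩ := hX
  have hne : eSetDistP g p v X ≠ ⊤ := eSetDistP_ne_top (mem_coe.mpr hu) v
  obtain ⟨w, hw, hvw⟩ := exists_mem_pBdry_supDist_le_eSetDistP (p := p) hAX ⟨u, hu⟩ hv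
  have hD : (eSetSetDistP g p A X).toReal ≤ (eSetDistP g p v X).toReal :=
    ENNReal.toReal_mono hne (iInf₂_le v hv)
  refine le_trans ?_ (single_le_sum (fun w _ => (Real.exp_pos _).le) hw)
  rw [expNegMul, if_neg hne]
  gcongr
  exact max_le hvw hD

end Lattice

section LayerCake

variable {ι : Type*}

theorem hasSum_indicator_Ici_pow {q : ℝ} (hq0 : 0 ≤ q) (hq1 : q < 1) (n : ℕ) :
    HasSum ((Set.Ici n).indicator (q ^ ·)) (q ^ n / (1 - q)) := by
  have hrange : ∀ j ∉ Set.range (· + n), (Set.Ici n).indicator (q ^ ·) j = 0 := by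
    intro j hj
    refine Set.indicator_of_notMem (fun hnj => hj ⟨j - n, ?_⟩) _
    simp only [Set.mem_Ici] at hnj
    exact Nat.sub_add_cancel hnj
  have hshift : (Set.Ici n).indicator (q ^ ·) ∘ (· + n) = fun i => q ^ n * q ^ i := by
    ext i
    simp [pow_add, mul_comm]
  rw [← (add_left_injective n).hasSum_iff hrange, hshift, div_eq_mul_inv]
  exact (hasSum_geometric_of_lt_one hq0 hq1).mul_left (q ^ n)

theorem sum_tsum_indicator_Ici (s : Finset ι) (k : ι → ℕ) {γ : ℕ → ℝ} (hγ : Summable γ) :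
    ∑ v ∈ s, ∑' j, (Set.Ici (k v)).indicator γ j = ∑' j, #{v ∈ s | k v ≤ j} * γ j := by
  rw [← Summable.tsum_finsetSum fun v _ => hγ.indicator _]
  congr 1
  ext j
  simp [Set.indicator_apply, Finset.sum_ite]

theorem sum_pow_two_mul_max_le {q : ℝ} (hq0 : 0 ≤ q) (hq1 : q < 1) (s : Finset ι) (k : ι → ℕ)
    (n : ℕ) {S : ℝ} (hS : ∀ j, #{v ∈ s | k v ≤ j} * q ^ j ≤ S) :
    ∑ v ∈ s, q ^ (2 * max (k v) n) ≤ S * (1 + q) * q ^ n := by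
  have hq2 : q ^ 2 < 1 := pow_lt_one₀ hq0 hq1 two_ne_zero
  have hgeom := hasSum_indicator_Ici_pow (sq_nonneg q) hq2
  have hpow : ∀ m, q ^ (2 * m) = (1 - q ^ 2) * ∑' j, (Set.Ici m).indicator ((q ^ 2) ^ ·) j := by
    intro m
    rw [(hgeom m).tsum_eq, pow_mul]
    field_simp [(sub_pos.mpr hq2).ne']
  have hterm : ∀ j, #{v ∈ s | max (k v) n ≤ j} * (q ^ 2) ^ j ≤
      S * (Set.Ici n).indicator (q ^ ·) j := by
    intro j
    by_cases hnj : n ≤ j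
    · have hfilter : {v ∈ s | max (k v) n ≤ j} = {v ∈ s | k v ≤ j} := by
        simp only [max_le_iff, hnj, and_true]
      rw [Set.indicator_of_mem (Set.mem_Ici.mpr hnj), hfilter, ← pow_mul, two_mul, pow_add,
        ← mul_assoc]
      exact mul_le_mul_of_nonneg_right (hS j) (pow_nonneg hq0 j)
    · have hfilter : {v ∈ s | max (k v) n ≤ j} = ∅ :=
        filter_false_of_mem fun v _ h => hnj ((le_max_right _ _).trans h)
      rw [hfilter, Set.indicator_of_notMem (show j ∉ Set.Ici n from hnj)]
      simp
  have hRHS := (hasSum_indicator_Ici_pow hq0 hq1 n).mul_left S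
  calc ∑ v ∈ s, q ^ (2 * max (k v) n)
      = (1 - q ^ 2) * ∑' j, #{v ∈ s | max (k v) n ≤ j} * (q ^ 2) ^ j := by
        simp_rw [hpow, ← mul_sum]
        rw [sum_tsum_indicator_Ici s _ (summable_geometric_of_lt_one (sq_nonneg q) hq2)]
    _ ≤ (1 - q ^ 2) * (S * (q ^ n / (1 - q))) := by
        refine mul_le_mul_of_nonneg_left ?_ (sub_pos.mpr hq2).le
        rw [← hRHS.tsum_eq]
        refine Summable.tsum_le_tsum hterm (Summable.of_nonneg_of_le (fun j => by positivity)
          hterm hRHS.summable) hRHS.summable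
    _ = S * (1 + q) * q ^ n := by
        field_simp [(sub_pos.mpr hq1).ne']
        ring

theorem rpow_add_rpow_one_sub_le {q θ : ℝ} (hq0 : 0 < q) (hq1 : q ≤ 1) (hθ0 : 0 ≤ θ)
    (hθ1 : θ ≤ 1) : q ^ θ + q ^ (1 - θ) ≤ 1 + q := by
  have hprod : q ^ θ * q ^ (1 - θ) = q := by
    rw [← Real.rpow_add hq0, add_sub_cancel, Real.rpow_one]
  have hx1 : q ^ θ ≤ 1 := Real.rpow_le_one hq0.le hq1 hθ0
  have hy1 : q ^ (1 - θ) ≤ 1 := Real.rpow_le_one hq0.le hq1 (by linarith)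
  nlinarith [mul_nonneg (sub_nonneg.mpr hx1) (sub_nonneg.mpr hy1)]

theorem rpow_two_mul_max_eq {q : ℝ} (hq0 : 0 < q) {D : ℝ} (hD : 0 ≤ D) (k : ℕ) :
    q ^ (2 * max (k : ℝ) D) =
      (if k ≤ ⌊D⌋₊ then q ^ (2 * D) - q ^ (2 * (⌊D⌋₊ + 1)) else 0) +
        q ^ (2 * max k (⌊D⌋₊ + 1)) := by
  by_cases hk : k ≤ ⌊D⌋₊
  · rw [if_pos hk, max_eq_right ((Nat.cast_le.mpr hk).trans (Nat.floor_le hD)),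
      max_eq_right (by omega)]
    ring
  · have hkD : D ≤ k := (Nat.lt_floor_add_one D).le.trans (by exact_mod_cast not_le.mp hk)
    rw [if_neg hk, max_eq_left hkD, max_eq_left (by omega), zero_add, ← Real.rpow_natCast]
    push_cast
    rfl

theorem sum_rpow_two_mul_max_le {q : ℝ} (hq0 : 0 < q) (hq1 : q < 1) (s : Finset ι)
    (k : ι → ℕ) {D : ℝ} (hD : 0 ≤ D) {S : ℝ} (hS : ∀ j, #{v ∈ s | k v ≤ j} * q ^ j ≤ S) :
    ∑ v ∈ s, q ^ (2 * max (k v : ℝ) D) ≤ S * (1 + q) * q ^ D := by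
  set m := ⌊D⌋₊
  set θ := D - m
  have hθ0 : 0 ≤ θ := sub_nonneg.mpr (Nat.floor_le hD)
  have hθ1 : θ ≤ 1 := by linarith [Nat.lt_floor_add_one D]
  have hqD : q ^ D = q ^ m * q ^ θ := by
    rw [← Real.rpow_natCast, ← Real.rpow_add hq0, add_sub_cancel]
  have hq2D : q ^ (2 * D) = (q ^ m * q ^ θ) ^ 2 := by
    rw [two_mul, Real.rpow_add hq0, hqD, sq]
  have hprod : q ^ θ * q ^ (1 - θ) = q := by
    rw [← Real.rpow_add hq0, add_sub_cancel, Real.rpow_one]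
  have hqθ : q ≤ q ^ θ := by simpa using Real.rpow_le_rpow_of_exponent_ge hq0 hq1.le hθ1
  have hS0 : 0 ≤ S := le_trans (by positivity) (hS 0)
  have hcount : (#{v ∈ s | k v ≤ m} : ℝ) ≤ S / q ^ m := by
    rw [le_div_iff₀ (by positivity)]
    exact hS m
  have hexcess : 0 ≤ q ^ (2 * D) - q ^ (2 * (m + 1)) := by
    rw [sub_nonneg, hq2D, show q ^ (2 * (m + 1)) = (q ^ m * q) ^ 2 by ring]
    gcongr
  calc ∑ v ∈ s, q ^ (2 * max (k v : ℝ) D)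
      = #{v ∈ s | k v ≤ m} * (q ^ (2 * D) - q ^ (2 * (m + 1))) +
          ∑ v ∈ s, q ^ (2 * max (k v) (m + 1)) := by
        rw [sum_congr rfl fun v _ => rpow_two_mul_max_eq hq0 hD (k v), sum_add_distrib,
          ← sum_filter, sum_const, nsmul_eq_mul]
    _ ≤ S / q ^ m * (q ^ (2 * D) - q ^ (2 * (m + 1))) + S * (1 + q) * q ^ (m + 1) :=
        add_le_add (mul_le_mul_of_nonneg_right hcount hexcess)
          (sum_pow_two_mul_max_le hq0.le hq1 s k (m + 1) hS)
    _ = S * q ^ m * q ^ θ * (q ^ θ + q ^ (1 - θ)) := by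
        rw [hq2D]
        field_simp
        linear_combination (-(S * (q ^ m) ^ 2)) * hprod
    _ ≤ S * q ^ m * q ^ θ * (1 + q) :=
        mul_le_mul_of_nonneg_left (rpow_add_rpow_one_sub_le hq0 hq1.le hθ0 hθ1) (by positivity)
    _ = S * (1 + q) * q ^ D := by
        rw [hqD]
        ring

end LayerCake

theorem sum_exp_neg_max_supDist_le {g : ℕ} {μ : ℝ} (hμ : 0 < μ) {S : ℝ}
    (hS : ∀ k : ℕ, (2 * (k : ℝ) + 1) ^ g * Real.exp (-(μ * k / 2)) ≤ S)
    (s : Finset (Fin g → ℤ)) (w : Fin g → ℤ) {D : ℝ} (hD : 0 ≤ D) :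
    ∑ v ∈ s, Real.exp (-(μ * max (supDist v w : ℝ) D)) ≤
      S * (1 + Real.exp (-(μ / 2))) * Real.exp (-(μ / 2 * D)) := by
  set q := Real.exp (-(μ / 2))
  have hexp : ∀ t, Real.exp (-(μ / 2 * t)) = q ^ t := fun t => by
    rw [← Real.exp_mul]; ring_nf
  have hq1 : q < 1 := Real.exp_lt_one_iff.mpr (by linarith)
  simp_rw [show ∀ t, -(μ * t) = -(μ / 2 * (2 * t)) by intro t; ring, hexp]
  refine sum_rpow_two_mul_max_le (Real.exp_pos _) hq1 s _ hD fun j => ?_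
  calc (#{v ∈ s | supDist v w ≤ j} : ℝ) * q ^ j ≤ (2 * (j : ℝ) + 1) ^ g * q ^ j := by
        gcongr
        exact_mod_cast card_filter_supDist_le s w j
    _ = (2 * (j : ℝ) + 1) ^ g * Real.exp (-(μ * j / 2)) := by
        rw [← Real.rpow_natCast q j, ← hexp]; ring_nf
    _ ≤ S := hS j

theorem bddAbove_range_pow_mul_exp (g : ℕ) {μ : ℝ} (hμ : 0 < μ) :
    BddAbove (Set.range fun k : ℕ => (2 * (k : ℝ) + 1) ^ g * Real.exp (-(μ * k / 2))) := by
  set r := Real.exp (-(μ / 4))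
  have hr : |r| < 1 := by
    rw [abs_of_pos (Real.exp_pos _), Real.exp_lt_one_iff]; linarith
  have hodd : Tendsto (fun k : ℕ => 2 * k + 1) atTop atTop :=
    tendsto_atTop_mono (fun k => show k ≤ 2 * k + 1 by omega) tendsto_id
  refine Tendsto.bddAbove_range (((tendsto_pow_const_mul_const_pow_of_abs_lt_one g hr).comp
    hodd).div_const r |>.congr fun k => ?_)
  simp only [Function.comp_apply, Nat.cast_add, Nat.cast_mul, Nat.cast_ofNat, Nat.cast_one, r,
    ← Real.exp_nat_mul, mul_div_assoc, ← Real.exp_sub]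
  ring_nf

theorem one_add_exp_le_tsum {μ : ℝ} (hμ : 0 < μ) :
    1 + Real.exp (-(μ / 2)) ≤ ∑' j : ℕ, Real.exp (-(μ * j / 2)) := by
  have hsum : Summable fun j : ℕ => Real.exp (-(μ * j / 2)) := by
    simp_rw [show ∀ j : ℕ, -(μ * j / 2) = j * -(μ / 2) by intro j; ring, Real.exp_nat_mul]
    exact summable_geometric_of_lt_one (Real.exp_pos _).le (Real.exp_lt_one_iff.mpr (by linarith))
  calc 1 + Real.exp (-(μ / 2)) = ∑ j ∈ range 2, Real.exp (-(μ * j / 2)) := by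
        simp [sum_range_succ]
    _ ≤ _ := hsum.sum_le_tsum _ fun j _ => (Real.exp_pos _).le

/-- (Remark 2.4.) Let `V = ℤ^g` with the distance induced by any `ℓ^p`
norm (`1 ≤ p ≤ ∞`), `μ > 0`, and `A, X` finite disjoint subsets of `V`. Then
`∑_{v∈A} e^{-μ dist(v,X)} ≤ ν |∂A| e^{-(μ/2) dist(A,X)}`, where
`ν = (sup_{k∈ℕ} (2k+1)^g e^{-μk/2}) · (∑_{j≥0} e^{-μj/2})`. -/
theorem boundary_sum_bound (g : ℕ) (p : ℝ≥0∞) [Fact (1 ≤ p)] (μ : ℝ) (hμ : 0 < μ)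
    (A X : Finset (Fin g → ℤ)) (hAX : Disjoint A X) :
    ∑ v ∈ A, expNegMul μ (eSetDistP g p v (X : Set (Fin g → ℤ))) ≤
      ((⨆ k : ℕ, (2 * (k : ℝ) + 1) ^ g * Real.exp (-(μ * k / 2))) *
          ∑' j : ℕ, Real.exp (-(μ * j / 2))) *
        ((pBdry g p A).card : ℝ) *
        expNegMul (μ / 2)
          (eSetSetDistP g p (A : Set (Fin g → ℤ)) (X : Set (Fin g → ℤ))) := by
  set S := ⨆ k : ℕ, (2 * (k : ℝ) + 1) ^ g * Real.exp (-(μ * k / 2))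
  set T := ∑' j : ℕ, Real.exp (-(μ * j / 2))
  have hS : ∀ k : ℕ, (2 * (k : ℝ) + 1) ^ g * Real.exp (-(μ * k / 2)) ≤ S :=
    le_ciSup (bddAbove_range_pow_mul_exp g hμ)
  have hS0 : 0 ≤ S := zero_le_one.trans (by simpa using hS 0)
  have hT : 1 + Real.exp (-(μ / 2)) ≤ T := one_add_exp_le_tsum hμ
  rcases X.eq_empty_or_nonempty with rfl | hX
  · rw [sum_eq_zero fun v _ => by simp [eSetDistP, expNegMul]]
    have hT0 : 0 ≤ T := by linarith [Real.exp_pos (-(μ / 2))]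
    exact mul_nonneg (by positivity) (expNegMul_nonneg _ _)
  rcases A.eq_empty_or_nonempty with rfl | ⟨v₀, hv₀⟩
  · simp [pBdry]
  obtain ⟨u₀, hu₀⟩ := hX
  have hDne : eSetSetDistP g p A X ≠ ⊤ :=
    ne_top_of_le_ne_top (eSetDistP_ne_top (mem_coe.mpr hu₀) v₀) (iInf₂_le v₀ hv₀)
  set D := (eSetSetDistP g p A X).toReal
  calc ∑ v ∈ A, expNegMul μ (eSetDistP g p v X)
      ≤ ∑ w ∈ pBdry g p A, ∑ v ∈ A, Real.exp (-(μ * max (supDist v w : ℝ) D)) := by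
        rw [sum_comm]
        exact sum_le_sum fun v hv => expNegMul_eSetDistP_le_sum_pBdry hAX ⟨u₀, hu₀⟩ hμ.le hv
    _ ≤ ∑ w ∈ pBdry g p A, S * T * Real.exp (-(μ / 2 * D)) := by
        refine sum_le_sum fun w _ => ?_
        refine (sum_exp_neg_max_supDist_le hμ hS A w ENNReal.toReal_nonneg).trans ?_
        gcongr
    _ = S * T * (#(pBdry g p A) : ℝ) * expNegMul (μ / 2) (eSetSetDistP g p A X) := by
        rw [sum_const, nsmul_eq_mul, expNegMul, if_neg hDne]
        ring
end
end
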